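/- arXiv:1910.10412 — 7 statements merged into one kernel-verified Lean document; each statement's English description precedes it below -/
import Mathlib

section
/- If G is a finite connected Helly graph, then 2·rad(G) ≥ diam(G) ≥ 2·rad(G) − 1; in particular, rad(G) = ⌈diam(G)/2⌉. -/
/-!
The upper bound `diam ≤ 2 rad` holds in every connected graph, by the triangle inequality
through a central vertex. For the lower bound, put `k = ⌈diam/2⌉`: any two balls of radius `k`
meet, at the vertex `k` steps along a shortest path between their centres. The Helly property
gives a vertex in all of them, whose eccentricity is therefore at most `k`.
-/

open SimpleGraph

variable {V : Type*}

/-- The ball of radius `r` centered at `v`. -/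
def gBall (G : SimpleGraph V) (v : V) (r : ℕ) : Set V := {u | G.dist v u ≤ r}

/-- A graph is Helly if every (nonempty) family of pairwise intersecting balls
has a nonempty common intersection. -/
def IsHelly (G : SimpleGraph V) : Prop :=
  ∀ F : Set (V × ℕ), F.Nonempty →
    (∀ p ∈ F, ∀ q ∈ F, (gBall G p.1 p.2 ∩ gBall G q.1 q.2).Nonempty) →
    (⋂ p ∈ F, gBall G p.1 p.2).Nonempty

/-- The eccentricity of a vertex. -/
noncomputable def ecc (G : SimpleGraph V) [Fintype V] (v : V) : ℕ :=
  Finset.univ.sup (fun u => G.dist v u)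

/-- The radius of a graph. -/
noncomputable def grad (G : SimpleGraph V) [Fintype V] : ℕ :=
  sInf (Set.range (ecc G))

/-- The diameter of a graph. -/
noncomputable def gdiam (G : SimpleGraph V) [Fintype V] : ℕ :=
  Finset.univ.sup (ecc G)

/-- The center of a graph: vertices of minimum eccentricity. -/
noncomputable def gcenter (G : SimpleGraph V) [Fintype V] : Set V :=
  {v | ecc G v = grad G}

/-- Distance from a vertex to a set of vertices. -/
noncomputable def distS (G : SimpleGraph V) (v : V) (S : Set V) : ℕ :=
  sInf (G.dist v '' S)

/-- The metric projection of a vertex onto a set of vertices. -/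
noncomputable def proj (G : SimpleGraph V) (v : V) (S : Set V) : Set V :=
  {s ∈ S | G.dist v s = distS G v S}

/-- The slice `L(u,k,v)`: vertices on the metric interval from `u` to `v`
at distance `k` from `u`. -/
def gslice (G : SimpleGraph V) (u : V) (k : ℕ) (v : V) : Set V :=
  {w | G.dist u w = k ∧ G.dist u w + G.dist w v = G.dist u v}

/-- A graph is `C₄`-free if it has no induced cycle on four vertices. -/
def C4Free (G : SimpleGraph V) : Prop :=
  ¬ ∃ a b c d : V, a ≠ b ∧ a ≠ c ∧ a ≠ d ∧ b ≠ c ∧ b ≠ d ∧ c ≠ d ∧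
    G.Adj a b ∧ G.Adj b c ∧ G.Adj c d ∧ G.Adj d a ∧ ¬ G.Adj a c ∧ ¬ G.Adj b d

/-- The open neighbourhood of a set: vertices outside it with a neighbour in it. -/
def nbhdSet (G : SimpleGraph V) (C : Set V) : Set V :=
  {v | v ∉ C ∧ ∃ c ∈ C, G.Adj v c}

section Eccentricity

variable (G : SimpleGraph V) [Fintype V]

lemma ecc_le_iff {v : V} {r : ℕ} : ecc G v ≤ r ↔ ∀ u, G.dist v u ≤ r := by
  simp [ecc, Finset.sup_le_iff]

lemma dist_le_ecc (v u : V) : G.dist v u ≤ ecc G v :=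
  (ecc_le_iff G).1 le_rfl u

lemma ecc_le_gdiam (v : V) : ecc G v ≤ gdiam G :=
  Finset.le_sup (Finset.mem_univ v)

lemma grad_le_ecc (v : V) : grad G ≤ ecc G v :=
  Nat.sInf_le ⟨v, rfl⟩

lemma exists_ecc_eq_grad [Nonempty V] : ∃ c, ecc G c = grad G :=
  Nat.sInf_mem (Set.range_nonempty _)

lemma gdiam_le_two_mul_grad (hconn : G.Connected) : gdiam G ≤ 2 * grad G := by
  have := hconn.nonempty
  obtain ⟨c, hc⟩ := exists_ecc_eq_grad G
  refine Finset.sup_le fun v _ => (ecc_le_iff G).2 fun u => ?_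
  calc G.dist v u ≤ G.dist v c + G.dist c u := hconn.dist_triangle
    _ = G.dist c v + G.dist c u := by rw [dist_comm]
    _ ≤ 2 * grad G := by linarith [dist_le_ecc G c v, dist_le_ecc G c u]

end Eccentricity

lemma gBall_inter_nonempty {G : SimpleGraph V} {u v : V} {r s : ℕ} (huv : G.Reachable u v)
    (hd : G.dist u v ≤ r + s) : (gBall G u r ∩ gBall G v s).Nonempty := by
  obtain ⟨p, hp⟩ := huv.exists_walk_length_eq_dist
  refine ⟨p.getVert r, ?_, ?_⟩
  · calc G.dist u (p.getVert r) ≤ (p.take r).length := dist_le _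
      _ ≤ r := by simp [Walk.take_length]
  · calc G.dist v (p.getVert r) = G.dist (p.getVert r) v := dist_comm
      _ ≤ (p.drop r).length := dist_le _
      _ ≤ s := by rw [Walk.drop_length]; omega

lemma IsHelly.grad_le (G : SimpleGraph V) [Fintype V] (hconn : G.Connected) (hH : IsHelly G) :
    grad G ≤ (gdiam G + 1) / 2 := by
  have := hconn.nonempty
  set k := (gdiam G + 1) / 2
  have hpairwise : ∀ p ∈ Set.range (·, k), ∀ q ∈ Set.range (·, k),
      (gBall G p.1 p.2 ∩ gBall G q.1 q.2).Nonempty := by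
    rintro _ ⟨u, rfl⟩ _ ⟨v, rfl⟩
    refine gBall_inter_nonempty (hconn u v) ?_
    have := (dist_le_ecc G u v).trans (ecc_le_gdiam G u)
    change G.dist u v ≤ k + k
    omega
  obtain ⟨w, hw⟩ := hH _ (Set.range_nonempty _) hpairwise
  rw [Set.biInter_range, Set.mem_iInter] at hw
  exact (grad_le_ecc G w).trans <| (ecc_le_iff G).2 fun u => dist_comm (G := G) ▸ hw u

/-- In a finite connected Helly graph,
`2·rad(G) ≥ diam(G) ≥ 2·rad(G) − 1` and `rad(G) = ⌈diam(G)/2⌉`. -/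
theorem stmt0 (G : SimpleGraph V) [Fintype V] (hconn : G.Connected) (hH : IsHelly G) :
    2 * grad G ≥ gdiam G ∧ gdiam G ≥ 2 * grad G - 1 ∧ grad G = (gdiam G + 1) / 2 := by
  have hupper := gdiam_le_two_mul_grad G hconn
  have hlower := hH.grad_le G hconn
  omega
end

section
/- Every ball of a finite connected C4-free Helly graph is convex: for every vertex v, every radius r ≥ 0, and every pair of vertices x, y in the ball N^r[v], every vertex w with dist(x,w) + dist(w,y) = dist(x,y) also lies in N^r[v]. -/
open SimpleGraph

variable {V : Type*}

/-!
Induction on `d(x, y)`. For an interval `x - w - y` of length two with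
`d(v, x) = d(v, y) = r < d(v, w)`, the Helly property for `N^(r-1)[v]`, `N^1[x]`, `N^1[y]` gives
a common neighbour `z` of `x` and `y` closer to `v`, and `x w y z` is an induced `C₄`.
For a longer interval, let `x'` be the neighbour of `x` on a geodesic to `w`. Helly gives a
neighbour `z` of `x` in the ball on a geodesic from `x` to `y`, and then a common neighbour `u`
of `x'` and `z` one step closer to `y`. By induction `u` lies in the ball (as `u ∈ I(z, y)`),
then `x'` (as `x' ∈ I(x, u)`, of length two), and finally `w` (as `w ∈ I(x', y)`).
-/

def GraphConvex (G : SimpleGraph V) (S : Set V) : Prop :=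
  ∀ x ∈ S, ∀ y ∈ S, ∀ w, G.dist x w + G.dist w y = G.dist x y → w ∈ S

@[simp]
lemma mem_gBall {G : SimpleGraph V} {v u : V} {r : ℕ} : u ∈ gBall G v r ↔ G.dist v u ≤ r :=
  Iff.rfl

lemma mem_gBall_self (G : SimpleGraph V) (v : V) (r : ℕ) : v ∈ gBall G v r := by
  simp

section

variable {G : SimpleGraph V}

lemma SimpleGraph.exists_adj_dist_eq_of_dist_eq_succ {x y : V} {n : ℕ} (h : G.dist x y = n + 1) :
    ∃ x', G.Adj x x' ∧ G.dist x' y = n := by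
  obtain ⟨p, hp⟩ := exists_walk_of_dist_ne_zero (G := G) (u := x) (v := y) (by omega)
  cases p with
  | nil => simp at h
  | @cons _ x' _ hadj q =>
    refine ⟨x', hadj, le_antisymm ?_ ?_⟩
    · have := dist_le q
      simp only [Walk.length_cons] at hp
      omega
    · have := hadj.reachable.dist_triangle_left y
      rw [dist_eq_one_iff_adj.mpr hadj] at this
      omega

lemma SimpleGraph.Connected.adj_of_dist_le_one (hconn : G.Connected) {u v : V}
    (h : G.dist u v ≤ 1) (hne : u ≠ v) : G.Adj u v :=
  dist_eq_one_iff_adj.mp (le_antisymm h (hconn.pos_dist_of_ne hne))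

lemma IsHelly.exists_common_point_three (hH : IsHelly G) {a b c : V} {r s t : ℕ}
    (hab : (gBall G a r ∩ gBall G b s).Nonempty) (hac : (gBall G a r ∩ gBall G c t).Nonempty)
    (hbc : (gBall G b s ∩ gBall G c t).Nonempty) :
    ∃ z, G.dist a z ≤ r ∧ G.dist b z ≤ s ∧ G.dist c z ≤ t := by
  have hself (p : V) (ρ : ℕ) : (gBall G p ρ).Nonempty := ⟨p, mem_gBall_self G p ρ⟩
  obtain ⟨z, hz⟩ := hH {(a, r), (b, s), (c, t)} (Set.insert_nonempty _ _) (by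
    simp only [Set.forall_mem_insert, Set.mem_singleton_iff, forall_eq, Set.inter_self, hself,
      hab, hac, hbc, Set.inter_comm (gBall G b s) (gBall G a r),
      Set.inter_comm (gBall G c t) (gBall G a r), Set.inter_comm (gBall G c t) (gBall G b s),
      and_self])
  simp only [Set.mem_iInter, Set.mem_insert_iff, Set.mem_singleton_iff, forall_eq_or_imp,
    forall_eq, mem_gBall] at hz
  exact ⟨z, hz⟩

lemma IsHelly.exists_adj_mem_gBall_dist_eq (hH : IsHelly G) (hconn : G.Connected)
    {v x y : V} {r n : ℕ} (hx : x ∈ gBall G v r) (hy : y ∈ gBall G v r)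
    (hxy : G.dist x y = n + 1) : ∃ z ∈ gBall G v r, G.Adj x z ∧ G.dist z y = n := by
  obtain ⟨x', hxx', hx'y⟩ := exists_adj_dist_eq_of_dist_eq_succ hxy
  obtain ⟨z, hvz, hxz, hzy⟩ := hH.exists_common_point_three (a := v) (b := x) (c := y)
    (r := r) (s := 1) (t := n)
    ⟨x, hx, mem_gBall_self G x 1⟩ ⟨y, hy, mem_gBall_self G y n⟩
    ⟨x', (dist_eq_one_iff_adj.mpr hxx').le, (dist_comm.trans hx'y).le⟩
  rw [dist_comm] at hzy
  have := hconn.dist_triangle (u := x) (v := z) (w := y)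
  refine ⟨z, hvz, hconn.adj_of_dist_le_one hxz ?_, by omega⟩
  rintro rfl
  omega

lemma IsHelly.exists_common_adj_dist_eq (hH : IsHelly G) (hconn : G.Connected)
    {x a b y : V} {n : ℕ} (hxa : G.Adj x a) (hxb : G.Adj x b)
    (hay : G.dist a y = n + 1) (hby : G.dist b y = n + 1) :
    ∃ u, G.Adj a u ∧ G.Adj b u ∧ G.dist u y = n := by
  obtain ⟨a', haa', ha'y⟩ := exists_adj_dist_eq_of_dist_eq_succ hay
  obtain ⟨b', hbb', hb'y⟩ := exists_adj_dist_eq_of_dist_eq_succ hby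
  obtain ⟨u, hau, hbu, hyu⟩ := hH.exists_common_point_three (a := a) (b := b) (c := y)
    (r := 1) (s := 1) (t := n)
    ⟨x, (dist_eq_one_iff_adj.mpr hxa.symm).le, (dist_eq_one_iff_adj.mpr hxb.symm).le⟩
    ⟨a', (dist_eq_one_iff_adj.mpr haa').le, (dist_comm.trans ha'y).le⟩
    ⟨b', (dist_eq_one_iff_adj.mpr hbb').le, (dist_comm.trans hb'y).le⟩
  rw [dist_comm] at hyu
  have hau' := hconn.dist_triangle (u := a) (v := u) (w := y)
  have hbu' := hconn.dist_triangle (u := b) (v := u) (w := y)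
  refine ⟨u, hconn.adj_of_dist_le_one hau ?_, hconn.adj_of_dist_le_one hbu ?_, by omega⟩ <;>
  · rintro rfl
    omega

theorem IsHelly.graphConvex_gBall_of_forall_dist_eq_two (hH : IsHelly G)
    (hconn : G.Connected) {v : V} {r : ℕ}
    (hloc : ∀ x ∈ gBall G v r, ∀ y ∈ gBall G v r, ∀ w, G.dist x y = 2 →
      G.Adj x w → G.Adj w y → w ∈ gBall G v r) :
    GraphConvex G (gBall G v r) := by
  intro x hx y hy w hw
  induction hxy : G.dist x y using Nat.strong_induction_on generalizing x y w with
  | _ n ih =>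
  rw [hxy] at hw
  obtain hxw | hxw := (G.dist x w).eq_zero_or_pos
  · rwa [← hconn.dist_eq_zero_iff.mp hxw]
  obtain hwy | hwy := (G.dist w y).eq_zero_or_pos
  · rwa [hconn.dist_eq_zero_iff.mp hwy]
  obtain ⟨m, rfl⟩ : ∃ m, n = m + 2 := ⟨n - 2, by omega⟩
  cases m with
  | zero =>
    exact hloc x hx y hy w hxy (dist_eq_one_iff_adj.mp (by omega))
      (dist_eq_one_iff_adj.mp (by omega))
  | succ m =>
    obtain ⟨a, ha⟩ : ∃ a, G.dist x w = a + 1 := ⟨_, (Nat.succ_pred_eq_of_pos hxw).symm⟩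
    obtain ⟨x', hxx', hx'w⟩ := exists_adj_dist_eq_of_dist_eq_succ ha
    have hx'y : G.dist x' y = m + 2 := by
      have := hconn.dist_triangle (u := x') (v := w) (w := y)
      have := hconn.dist_triangle (u := x) (v := x') (w := y)
      rw [dist_eq_one_iff_adj.mpr hxx'] at this
      omega
    obtain ⟨z, hz, hxz, hzy⟩ :=
      hH.exists_adj_mem_gBall_dist_eq hconn hx hy (by omega : G.dist x y = (m + 2) + 1)
    obtain ⟨u, hx'u, hzu, huy⟩ := hH.exists_common_adj_dist_eq hconn hxx' hxz hx'y hzy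
    have hu : u ∈ gBall G v r :=
      ih (m + 2) (by omega) z hz y hy u (by rw [dist_eq_one_iff_adj.mpr hzu, huy, hzy]; omega) hzy
    have hxu : G.dist x u = 2 := by
      have := hconn.dist_triangle (u := x) (v := x') (w := u)
      have := hconn.dist_triangle (u := x) (v := u) (w := y)
      have := dist_eq_one_iff_adj.mpr hxx'
      have := dist_eq_one_iff_adj.mpr hx'u
      omega
    have hx' : x' ∈ gBall G v r :=
      ih 2 (by omega) x hx u hu x'
        (by rw [dist_eq_one_iff_adj.mpr hxx', dist_eq_one_iff_adj.mpr hx'u, hxu]) hxu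
    exact ih (m + 2) (by omega) x' hx' y hy w (by omega) hx'y

theorem C4Free.mem_gBall_of_adj_of_adj (hC4 : C4Free G) (hH : IsHelly G) (hconn : G.Connected)
    {v x y w : V} {r : ℕ} (hx : x ∈ gBall G v r) (hy : y ∈ gBall G v r) (hxy : G.dist x y = 2)
    (hxw : G.Adj x w) (hwy : G.Adj w y) : w ∈ gBall G v r := by
  by_contra hw
  simp only [mem_gBall, not_le] at hx hy hw
  have hvw := hconn.dist_triangle (u := v) (v := x) (w := w)
  have hvw' := hconn.dist_triangle (u := v) (v := y) (w := w)
  have hxvy := hconn.dist_triangle (u := x) (v := v) (w := y)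
  rw [dist_eq_one_iff_adj.mpr hxw] at hvw
  rw [dist_eq_one_iff_adj.mpr hwy.symm] at hvw'
  have hxv : G.dist x v = G.dist v x := dist_comm
  obtain ⟨m, rfl⟩ : ∃ m, r = m + 1 := ⟨r - 1, by omega⟩
  obtain ⟨x', hxx', hx'v⟩ :=
    exists_adj_dist_eq_of_dist_eq_succ (dist_comm.trans (by omega : G.dist v x = m + 1))
  obtain ⟨y', hyy', hy'v⟩ :=
    exists_adj_dist_eq_of_dist_eq_succ (dist_comm.trans (by omega : G.dist v y = m + 1))
  obtain ⟨z, hvz, hxz, hyz⟩ := hH.exists_common_point_three (a := v) (b := x) (c := y)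
    (r := m) (s := 1) (t := 1)
    ⟨x', (dist_comm.trans hx'v).le, (dist_eq_one_iff_adj.mpr hxx').le⟩
    ⟨y', (dist_comm.trans hy'v).le, (dist_eq_one_iff_adj.mpr hyy').le⟩
    ⟨w, (dist_eq_one_iff_adj.mpr hxw).le, (dist_eq_one_iff_adj.mpr hwy.symm).le⟩
  have hxz' : G.Adj x z := hconn.adj_of_dist_le_one hxz (by rintro rfl; omega)
  have hyz' : G.Adj y z := hconn.adj_of_dist_le_one hyz (by rintro rfl; omega)
  have hwz : ¬G.Adj w z := fun h => by
    have := hconn.dist_triangle (u := v) (v := z) (w := w)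
    rw [dist_eq_one_iff_adj.mpr h.symm] at this
    omega
  refine hC4 ⟨x, w, y, z, hxw.ne, fun h => by simp [h] at hxy, hxz'.ne, hwy.ne,
    by rintro rfl; omega, hyz'.ne, hxw, hwy, hyz', hxz'.symm,
    fun h => by simp [dist_eq_one_iff_adj.mpr h] at hxy, hwz⟩

end

theorem stmt3_general (G : SimpleGraph V) (hconn : G.Connected) (hH : IsHelly G)
    (hC4 : C4Free G) (v : V) (r : ℕ) :
    ∀ x ∈ gBall G v r, ∀ y ∈ gBall G v r, ∀ w : V,
      G.dist x w + G.dist w y = G.dist x y → w ∈ gBall G v r :=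
  hH.graphConvex_gBall_of_forall_dist_eq_two hconn fun _ hx _ hy _ hxy hxw hwy =>
    hC4.mem_gBall_of_adj_of_adj hH hconn hx hy hxy hxw hwy

/-- Every ball of a finite connected C4-free Helly graph is convex. -/
theorem stmt3 (G : SimpleGraph V) [Fintype V] (hconn : G.Connected) (hH : IsHelly G)
    (hC4 : C4Free G) (v : V) (r : ℕ) :
    ∀ x ∈ gBall G v r, ∀ y ∈ gBall G v r, ∀ w : V,
      G.dist x w + G.dist w y = G.dist x y → w ∈ gBall G v r :=
  stmt3_general G hconn hH hC4 v r
end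

section
/- Let G be a finite connected Helly graph and let S be a nonempty set of vertices of weak diameter at most two (i.e., dist(x,y) ≤ 2 in G for all x, y ∈ S). Then for any vertex v ∉ S there exists a vertex g with dist(v,g) ≤ dist(v,S) − 1 that is adjacent to every vertex of the metric projection Pr(v,S). -/
open SimpleGraph

variable {V : Type*}

/-! The gate is a common point of the ball of radius `dist(v,S) - 1` around `v` and the unit
balls around the points of `Pr(v,S)`. These balls pairwise intersect because balls of radii
`r` and `s` whose centres are at distance at most `r + s` meet on a shortest path, so the
Helly property provides the gate; it lies strictly closer to `v` than `Pr(v,S)`, hence is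
distinct from, and so adjacent to, each projection point. -/

namespace SimpleGraph

variable {G : SimpleGraph V}

theorem Reachable.gBall_inter_gBall_nonempty {a b : V} {r s : ℕ} (hab : G.Reachable a b)
    (h : G.dist a b ≤ r + s) : (gBall G a r ∩ gBall G b s).Nonempty := by
  obtain ⟨p, hp⟩ := hab.exists_walk_length_eq_dist
  refine ⟨p.getVert r, (dist_le (p.take r)).trans ?_, ?_⟩
  · simp
  · change G.dist b (p.getVert r) ≤ s
    rw [dist_comm]
    refine (dist_le (p.drop r)).trans ?_
    simp only [Walk.drop_length]
    omega

theorem Reachable.adj_of_dist_le_one {u v : V} (h : G.Reachable u v) (hne : u ≠ v)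
    (hdist : G.dist u v ≤ 1) : G.Adj u v := by
  by_contra hnadj
  exact (h.one_lt_dist_of_ne_of_not_adj hne hnadj).not_ge hdist

theorem IsHelly.exists_forall_dist_le (hH : IsHelly G) (hconn : G.Connected) {v : V}
    {r s : ℕ} {P : Set V} (hvP : ∀ p ∈ P, G.dist v p ≤ r + s)
    (hP : ∀ p ∈ P, ∀ q ∈ P, G.dist p q ≤ s + s) :
    ∃ g, G.dist v g ≤ r ∧ ∀ p ∈ P, G.dist p g ≤ s := by
  set F : Set (V × ℕ) := insert (v, r) ((·, s) '' P)
  have hF : ∀ x ∈ F, ∀ y ∈ F, G.dist x.1 y.1 ≤ x.2 + y.2 := by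
    rintro x (rfl | ⟨p, hp, rfl⟩) y (rfl | ⟨q, hq, rfl⟩)
    · simp
    · exact hvP q hq
    · rw [dist_comm, add_comm]
      exact hvP p hp
    · exact hP p hp q hq
  obtain ⟨g, hg⟩ := hH F (Set.insert_nonempty _ _) fun x hx y hy ↦
    (hconn x.1 y.1).gBall_inter_gBall_nonempty (hF x hx y hy)
  rw [Set.mem_iInter₂] at hg
  exact ⟨g, hg _ (Set.mem_insert _ _), fun p hp ↦ hg (p, s) (Set.mem_insert_of_mem _ ⟨p, hp, rfl⟩)⟩

theorem proj_nonempty {S : Set V} (hS : S.Nonempty) (v : V) : (proj G v S).Nonempty := by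
  obtain ⟨s, hs, hsd⟩ := Nat.sInf_mem (hS.image (G.dist v))
  exact ⟨s, hs, hsd⟩

end SimpleGraph

theorem stmt7_general (G : SimpleGraph V) (hconn : G.Connected) (hH : IsHelly G)
    (S : Set V) (hSne : S.Nonempty) (hweak : ∀ x ∈ S, ∀ y ∈ S, G.dist x y ≤ 2)
    (v : V) (hv : v ∉ S) :
    ∃ g : V, G.dist v g ≤ distS G v S - 1 ∧ ∀ p ∈ proj G v S, G.Adj g p := by
  obtain ⟨s, hsS, hsd⟩ := proj_nonempty hSne v
  have hpos : 0 < distS G v S :=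
    hsd ▸ (hconn v s).pos_dist_of_ne fun hvs ↦ hv (hvs ▸ hsS)
  obtain ⟨g, hvg, hgP⟩ := hH.exists_forall_dist_le hconn (r := distS G v S - 1) (s := 1)
    (P := proj G v S) (fun p hp ↦ by rw [hp.2]; omega) fun p hp q hq ↦ hweak p hp.1 q hq.1
  refine ⟨g, hvg, fun p hp ↦ ((hconn p g).adj_of_dist_le_one ?_ (hgP p hp)).symm⟩
  rintro rfl
  have := hp.2
  omega

/-- In a finite connected Helly graph, for every nonempty set `S` of
weak diameter at most two and every vertex `v ∉ S`, there is a gate `g` at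
distance at most `dist(v,S) − 1` from `v` adjacent to all of `Pr(v,S)`. -/
theorem stmt7 (G : SimpleGraph V) [Fintype V] (hconn : G.Connected) (hH : IsHelly G)
    (S : Set V) (hSne : S.Nonempty) (hweak : ∀ x ∈ S, ∀ y ∈ S, G.dist x y ≤ 2)
    (v : V) (hv : v ∉ S) :
    ∃ g : V, G.dist v g ≤ distS G v S - 1 ∧ ∀ p ∈ proj G v S, G.Adj g p :=
  stmt7_general G hconn hH S hSne hweak v hv
end

section
/- In a finite connected C4-free Helly graph G, for any clique C and any two adjacent vertices s, t ∈ N(C) (the open neighbourhood of C), the metric projections Pr(s,C) and Pr(t,C) are comparable: either Pr(s,C) ⊆ Pr(t,C) or Pr(t,C) ⊆ Pr(s,C). -/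
/-!
A vertex of `N(C)` is at distance one from `C`, so its projection onto `C` is just its set of
neighbours in `C`. If `a ∈ Pr(s,C) \ Pr(t,C)` and `b ∈ Pr(t,C) \ Pr(s,C)`, then `a ≠ b` lie in
the clique `C`, and `s a b t` is an induced four-cycle.
-/

open SimpleGraph

variable {V : Type*}

namespace SimpleGraph

variable {G : SimpleGraph V}

lemma C4Free.adj_or_adj_of_cycle (hC4 : C4Free G) {a b c d : V} (hab : G.Adj a b)
    (hbc : G.Adj b c) (hcd : G.Adj c d) (hda : G.Adj d a) (hac : a ≠ c) (hbd : b ≠ d) :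
    G.Adj a c ∨ G.Adj b d := by
  by_contra! h
  exact hC4 ⟨a, b, c, d, hab.ne, hac, hda.ne.symm, hbc.ne, hbd, hcd.ne,
    hab, hbc, hcd, hda, h.1, h.2⟩

lemma Connected.distS_eq_one_of_mem_nbhdSet (hconn : G.Connected) {C : Set V} {v : V}
    (hv : v ∈ nbhdSet G C) : distS G v C = 1 := by
  obtain ⟨hvC, c₀, hc₀, hvc₀⟩ := hv
  refine IsLeast.csInf_eq ⟨⟨c₀, hc₀, dist_eq_one_iff_adj.2 hvc₀⟩, ?_⟩
  rintro _ ⟨c, hc, rfl⟩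
  exact hconn.pos_dist_of_ne (ne_of_mem_of_not_mem hc hvC).symm

lemma Connected.mem_proj_iff_of_mem_nbhdSet (hconn : G.Connected) {C : Set V} {v : V}
    (hv : v ∈ nbhdSet G C) {c : V} : c ∈ proj G v C ↔ c ∈ C ∧ G.Adj v c := by
  rw [proj, Set.mem_ofPred_eq, hconn.distS_eq_one_of_mem_nbhdSet hv, dist_eq_one_iff_adj]

end SimpleGraph

theorem stmt9_general (G : SimpleGraph V) (hconn : G.Connected)
    (hC4 : C4Free G) (C : Set V) (hC : G.IsClique C)
    (s t : V) (hs : s ∈ nbhdSet G C) (ht : t ∈ nbhdSet G C) (hst : G.Adj s t) :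
    proj G s C ⊆ proj G t C ∨ proj G t C ⊆ proj G s C := by
  by_contra! hcon
  obtain ⟨⟨a, has, hat⟩, ⟨b, hbt, hbs⟩⟩ := And.imp Set.not_subset.1 Set.not_subset.1 hcon
  rw [hconn.mem_proj_iff_of_mem_nbhdSet hs] at has hbs
  rw [hconn.mem_proj_iff_of_mem_nbhdSet ht] at hat hbt
  obtain ⟨haC, hsa⟩ := has
  obtain ⟨hbC, htb⟩ := hbt
  have hta : ¬ G.Adj t a := fun h => hat ⟨haC, h⟩
  have hsb : ¬ G.Adj s b := fun h => hbs ⟨hbC, h⟩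
  have hab : G.Adj a b := hC haC hbC (by rintro rfl; exact hsb hsa)
  have hsb' : s ≠ b := (ne_of_mem_of_not_mem hbC hs.1).symm
  have hat' : a ≠ t := ne_of_mem_of_not_mem haC ht.1
  rcases hC4.adj_or_adj_of_cycle hsa hab htb.symm hst.symm hsb' hat' with h | h
  · exact hsb h
  · exact hta h.symm

/-- In a finite connected C4-free Helly graph, for any clique `C` and
adjacent vertices `s, t ∈ N(C)`, the projections `Pr(s,C)` and `Pr(t,C)` are
comparable. -/
theorem stmt9 (G : SimpleGraph V) [Fintype V] (hconn : G.Connected) (hH : IsHelly G)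
    (hC4 : C4Free G) (C : Set V) (hC : G.IsClique C)
    (s t : V) (hs : s ∈ nbhdSet G C) (ht : t ∈ nbhdSet G C) (hst : G.Adj s t) :
    proj G s C ⊆ proj G t C ∨ proj G t C ⊆ proj G s C :=
  stmt9_general G hconn hC4 C hC s t hs ht hst
end

section
/- A finite connected Helly graph G has diameter at most 2 if and only if G contains a universal vertex, i.e., a vertex adjacent to all other vertices. -/
open SimpleGraph

variable {V : Type*}

/-! If any two vertices are at distance at most `2 r`, the balls of radius `r` pairwise meet at a
midpoint of a geodesic, so by the Helly property some vertex lies in all of them. Conversely, a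
vertex within distance `r` of everything puts every pair within `2 r` by the triangle
inequality. The case `r = 1` is the theorem. -/

namespace SimpleGraph

variable {G : SimpleGraph V}

theorem gdiam_le_iff [Fintype V] {k : ℕ} : gdiam G ≤ k ↔ ∀ a b, G.dist a b ≤ k := by
  simp only [gdiam, ecc, Finset.sup_le_iff, Finset.mem_univ, true_implies]

theorem Reachable.exists_dist_le_dist_le {a b : V} (hab : G.Reachable a b) {m n : ℕ}
    (h : G.dist a b ≤ m + n) : ∃ c, G.dist a c ≤ m ∧ G.dist c b ≤ n := by
  obtain ⟨p, hp⟩ := hab.exists_walk_length_eq_dist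
  refine ⟨p.getVert m, ?_, ?_⟩
  · calc G.dist a (p.getVert m) ≤ (p.take m).length := dist_le _
      _ ≤ m := by rw [Walk.take_length]; exact min_le_left _ _
  · calc G.dist (p.getVert m) b ≤ (p.drop m).length := dist_le _
      _ ≤ n := by rw [Walk.drop_length]; omega

theorem Reachable.dist_le_one_iff {a b : V} (hab : G.Reachable a b) :
    G.dist a b ≤ 1 ↔ (b ≠ a → G.Adj a b) := by
  rw [← Nat.cast_le (α := ℕ∞), hab.coe_dist_eq_edist, Nat.cast_one,
    edist_le_one_iff_adj_or_eq, eq_comm]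
  tauto

theorem IsHelly.exists_forall_dist_le_s11 (hH : IsHelly G) (hconn : G.Connected)
    {r : ℕ} (h : ∀ a b, G.dist a b ≤ 2 * r) : ∃ c, ∀ u, G.dist c u ≤ r := by
  have : Nonempty V := hconn.nonempty
  obtain ⟨c, hc⟩ := hH (Set.range fun v => (v, r)) (Set.range_nonempty _) <| by
    rintro _ ⟨a, rfl⟩ _ ⟨b, rfl⟩
    obtain ⟨c, hac, hcb⟩ :=
      (hconn a b).exists_dist_le_dist_le (m := r) (n := r) (by linarith [h a b])
    exact ⟨c, hac, dist_comm.trans_le hcb⟩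
  refine ⟨c, fun u => ?_⟩
  rw [Set.mem_iInter₂] at hc
  exact dist_comm (G := G) ▸ hc (u, r) ⟨u, rfl⟩

theorem Connected.gdiam_le_two_mul [Fintype V] (hconn : G.Connected) {c : V} {r : ℕ}
    (hc : ∀ u, G.dist c u ≤ r) : gdiam G ≤ 2 * r :=
  gdiam_le_iff.2 fun a b =>
    calc G.dist a b ≤ G.dist a c + G.dist c b := hconn.dist_triangle
      _ ≤ 2 * r := by rw [dist_comm]; linarith [hc a, hc b]

theorem IsHelly.gdiam_le_two_mul_iff [Fintype V] (hH : IsHelly G) (hconn : G.Connected)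
    {r : ℕ} : gdiam G ≤ 2 * r ↔ ∃ c, ∀ u, G.dist c u ≤ r :=
  ⟨fun h => hH.exists_forall_dist_le_s11 hconn (gdiam_le_iff.1 h),
    fun ⟨_, hc⟩ => hconn.gdiam_le_two_mul hc⟩

end SimpleGraph

/-- A finite connected Helly graph has diameter at most 2 iff it
contains a universal vertex. -/
theorem stmt11 (G : SimpleGraph V) [Fintype V] (hconn : G.Connected) (hH : IsHelly G) :
    gdiam G ≤ 2 ↔ ∃ v : V, ∀ u : V, u ≠ v → G.Adj v u := by
  simp only [← (hconn _ _).dist_le_one_iff]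
  exact hH.gdiam_le_two_mul_iff hconn (r := 1)
end

section
/- Let G be a finite connected C4-free Helly graph with radius r ≥ 3 and diameter 2r − 1, let (x,y) be a diametral pair, let Z = {z : dist(z,x) = dist(z,y) = r}, and let w be a vertex with dist(w, L(x,r−1,y) ∪ L(y,r−1,x)) = r. Then dist(x,w) = dist(y,w) = 2r − 1 and dist(w,Z) = r − 1; moreover, Pr(w,Z) = L(w, r−1, x) ∩ L(w, r−1, y) and this set is a clique. -/
open SimpleGraph

variable {V : Type*}

/-! Helly's property, applied to three balls at a time, produces every vertex the argument
needs. If `d(x,w) < 2r-1`, the balls `N^(r-1)[x]`, `N^r[y]`, `N^(r-1)[w]` meet, in a vertex of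
`L(x,r-1,y)` at distance `< r` from `w`. The balls `N^r[x]`, `N^r[y]`, `N^(r-1)[w]` meet, in a
vertex of `L(w,r-1,x) ∩ L(w,r-1,y) ⊆ Z`, while every vertex of `Z` is at distance `≥ r-1`
from `w`; so this intersection is `Pr(w,Z)`.

It is a clique because in a C₄-free Helly graph every slice `L(x,k,w)` is one: two of its
vertices at distance two would have a common neighbour one step closer to `x` and another
one step closer to `w`, spanning an induced C₄; and Helly finds, for two vertices of the slice at
distance `d ≥ 2`, a third one adjacent to the first and at distance `< d` from the second. -/

namespace SimpleGraph

variable {G : SimpleGraph V}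

lemma Reachable.exists_dist_le_and_dist_le {a b : V} (hab : G.Reachable a b) {m n : ℕ}
    (h : G.dist a b ≤ m + n) : ∃ u, G.dist a u ≤ m ∧ G.dist u b ≤ n := by
  obtain ⟨p, hp⟩ := hab.exists_walk_length_eq_dist
  refine ⟨p.getVert m, (dist_le (p.take m)).trans ?_, (dist_le (p.drop m)).trans ?_⟩ <;>
    simp only [Walk.take_length, Walk.drop_length] <;> omega

lemma Connected.adj_of_dist_le_one_s16 (hconn : G.Connected) {a b : V} (h : G.dist a b ≤ 1)
    (hne : a ≠ b) : G.Adj a b :=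
  dist_eq_one_iff_adj.mp (le_antisymm h (hconn.pos_dist_of_ne hne))

end SimpleGraph

section

variable {G : SimpleGraph V}

lemma dist_le_gdiam [Fintype V] (a b : V) : G.dist a b ≤ gdiam G :=
  (Finset.le_sup (f := fun u => G.dist a u) (Finset.mem_univ b)).trans
    (Finset.le_sup (f := ecc G) (Finset.mem_univ a))

lemma distS_le_dist {S : Set V} {v s : V} (hs : s ∈ S) : distS G v S ≤ G.dist v s :=
  Nat.sInf_le ⟨s, hs, rfl⟩

lemma distS_eq_of_mem_of_forall_le {S : Set V} {v s : V} {d : ℕ} (hs : s ∈ S)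
    (hvs : G.dist v s = d) (h : ∀ t ∈ S, d ≤ G.dist v t) : distS G v S = d :=
  IsLeast.csInf_eq ⟨⟨s, hs, hvs⟩, by rintro _ ⟨t, ht, rfl⟩; exact h t ht⟩

lemma C4Free.adj_of_adj_of_adj (hC4 : C4Free G) {a b u v : V} (hab : G.dist a b = 2)
    (hau : G.Adj a u) (hub : G.Adj u b) (hav : G.Adj a v) (hvb : G.Adj v b) (huv : u ≠ v) :
    G.Adj u v := by
  by_contra hnuv
  have hnab : ¬ G.Adj a b := fun h => by rw [dist_eq_one_iff_adj.mpr h] at hab; omega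
  have hne : a ≠ b := by rintro rfl; simp at hab
  exact hC4 ⟨a, u, b, v, hau.ne, hne, hav.ne, hub.ne, huv, hvb.ne', hau, hub, hvb.symm, hav.symm,
    hnab, hnuv⟩

namespace IsHelly

lemma exists_forall_dist_le (hH : IsHelly G) (hconn : G.Connected) {ι : Type*} [Nonempty ι]
    (c : ι → V) (ρ : ι → ℕ) (h : ∀ i j, G.dist (c i) (c j) ≤ ρ i + ρ j) :
    ∃ v, ∀ i, G.dist (c i) v ≤ ρ i := by
  obtain ⟨v, hv⟩ := hH (Set.range fun i => (c i, ρ i)) (Set.range_nonempty _) <| by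
    rintro _ ⟨i, rfl⟩ _ ⟨j, rfl⟩
    obtain ⟨u, hiu, huj⟩ := (hconn.preconnected _ _).exists_dist_le_and_dist_le (h i j)
    exact ⟨u, hiu, by rwa [gBall, Set.mem_ofPred_eq, dist_comm]⟩
  exact ⟨v, fun i => Set.mem_iInter₂.mp hv (c i, ρ i) ⟨i, rfl⟩⟩

lemma exists_dist_le₃ (hH : IsHelly G) (hconn : G.Connected) {a b c : V} {l m n : ℕ}
    (hab : G.dist a b ≤ l + m) (hac : G.dist a c ≤ l + n) (hbc : G.dist b c ≤ m + n) :
    ∃ v, G.dist a v ≤ l ∧ G.dist b v ≤ m ∧ G.dist c v ≤ n := by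
  obtain ⟨v, hv⟩ := hH.exists_forall_dist_le hconn ![a, b, c] ![l, m, n] <| by
    intro i j
    fin_cases i <;> fin_cases j <;> simp [dist_comm] <;> omega
  exact ⟨v, hv 0, hv 1, hv 2⟩

lemma exists_mem_gslice_dist_le (hH : IsHelly G) (hconn : G.Connected) {x y w : V}
    {k l m : ℕ} (hxy : G.dist x y = k + l) (hxw : G.dist x w ≤ k + m)
    (hyw : G.dist y w ≤ l + m) : ∃ v ∈ gslice G x k y, G.dist w v ≤ m := by
  obtain ⟨v, hxv, hyv, hwv⟩ := hH.exists_dist_le₃ hconn hxy.le hxw hyw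
  have := hconn.dist_triangle (u := x) (v := v) (w := y)
  rw [dist_comm (u := y)] at hyv
  exact ⟨v, ⟨by omega, by omega⟩, hwv⟩

lemma exists_mem_gslice_step (hH : IsHelly G) (hconn : G.Connected) {x w a b : V} {k : ℕ}
    (ha : a ∈ gslice G x k w) (hb : b ∈ gslice G x k w) (hab : 1 ≤ G.dist a b) :
    ∃ s ∈ gslice G x k w, G.dist a s ≤ 1 ∧ G.dist s b ≤ G.dist a b - 1 := by
  obtain ⟨hxa, haw⟩ := ha
  obtain ⟨hxb, hbw⟩ := hb
  have := G.dist_comm (u := a) (v := x)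
  have := G.dist_comm (u := b) (v := x)
  have := G.dist_comm (u := b) (v := a)
  have := G.dist_comm (u := w) (v := a)
  have := G.dist_comm (u := w) (v := b)
  have := G.dist_comm (u := w) (v := x)
  obtain ⟨s, hs⟩ := hH.exists_forall_dist_le hconn ![a, b, x, w]
    ![1, G.dist a b - 1, k, G.dist x w - k] <| by
    intro i j
    fin_cases i <;> fin_cases j <;> simp <;> omega
  have hxs : G.dist x s ≤ k := hs 2
  have hws : G.dist w s ≤ G.dist x w - k := hs 3
  have := hconn.dist_triangle (u := x) (v := s) (w := w)
  have := G.dist_comm (u := s) (v := w)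
  refine ⟨s, ⟨by omega, by omega⟩, hs 0, ?_⟩
  rw [dist_comm]
  exact hs 1

lemma gslice_dist_ne_two (hH : IsHelly G) (hconn : G.Connected) (hC4 : C4Free G)
    {x w a b : V} {k : ℕ} (ha : a ∈ gslice G x k w) (hb : b ∈ gslice G x k w) :
    G.dist a b ≠ 2 := by
  intro hab
  obtain ⟨hxa, haw⟩ := ha
  obtain ⟨hxb, hbw⟩ := hb
  have hne : a ≠ b := by rintro rfl; simp at hab
  have hk : 1 ≤ k := by
    by_contra! h0
    have hxa : x = a := hconn.dist_eq_zero_iff.mp (by omega)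
    have hxb : x = b := hconn.dist_eq_zero_iff.mp (by omega)
    exact hne (hxa.symm.trans hxb)
  have hkw : k + 1 ≤ G.dist x w := by
    by_contra! h0
    have haw : a = w := hconn.dist_eq_zero_iff.mp (by omega)
    have hbw : b = w := hconn.dist_eq_zero_iff.mp (by omega)
    exact hne (haw.trans hbw.symm)
  have := G.dist_comm (u := a) (v := x)
  have := G.dist_comm (u := b) (v := x)
  have := G.dist_comm (u := w) (v := a)
  have := G.dist_comm (u := w) (v := b)
  -- common neighbours of `a`, `b` one step closer to `x`, resp. `w`; with `a`, `b` an induced C₄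
  obtain ⟨u, hau, hbu, hxu⟩ := hH.exists_dist_le₃ hconn (a := a) (b := b) (c := x)
    (l := 1) (m := 1) (n := k - 1) (by omega) (by omega) (by omega)
  obtain ⟨v, hav, hbv, hwv⟩ := hH.exists_dist_le₃ hconn (a := a) (b := b) (c := w)
    (l := 1) (m := 1) (n := G.dist x w - k - 1) (by omega) (by omega) (by omega)
  have hxuw := hconn.dist_triangle (u := x) (v := u) (w := w)
  have huvw := hconn.dist_triangle (u := u) (v := v) (w := w)
  have := G.dist_comm (u := w) (v := v)
  have huv : 2 ≤ G.dist u v := by omega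
  have hua : u ≠ a := by rintro rfl; omega
  have hub : u ≠ b := by rintro rfl; omega
  have hva : v ≠ a := by rintro rfl; omega
  have hvb : v ≠ b := by rintro rfl; omega
  have hadj := hC4.adj_of_adj_of_adj hab (hconn.adj_of_dist_le_one_s16 hau hua.symm)
    (hconn.adj_of_dist_le_one_s16 (by rwa [SimpleGraph.dist_comm]) hub)
    (hconn.adj_of_dist_le_one_s16 hav hva.symm)
    (hconn.adj_of_dist_le_one_s16 (by rwa [SimpleGraph.dist_comm]) hvb)
    (by rintro rfl; simp at huv)
  rw [dist_eq_one_iff_adj.mpr hadj] at huv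
  omega

theorem isClique_gslice (hH : IsHelly G) (hconn : G.Connected) (hC4 : C4Free G)
    (x : V) (k : ℕ) (w : V) : G.IsClique (gslice G x k w) := by
  suffices h : ∀ n, ∀ a ∈ gslice G x k w, ∀ b ∈ gslice G x k w, G.dist a b = n →
      G.dist a b ≤ 1 from
    fun a ha b hb hne => hconn.adj_of_dist_le_one_s16 (h _ a ha b hb rfl) hne
  intro n
  induction n using Nat.strong_induction_on with
  | _ n ih =>
    intro a ha b hb hn
    by_contra! hab
    obtain ⟨s, hs, has, hsb⟩ := hH.exists_mem_gslice_step hconn ha hb (by omega)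
    have hsb' := ih _ (by omega) s hs b hb rfl
    have := hconn.dist_triangle (u := a) (v := s) (w := b)
    exact hH.gslice_dist_ne_two hconn hC4 ha hb (by omega)

end IsHelly

end

section

variable {G : SimpleGraph V}

lemma mem_gslice_iff_of_dist_eq {w x z : V} {r : ℕ} (hr : 1 ≤ r)
    (hwx : G.dist w x = 2 * r - 1) :
    z ∈ gslice G w (r - 1) x ↔ G.dist w z = r - 1 ∧ G.dist z x = r := by
  simp only [gslice, Set.mem_ofPred_eq, hwx]
  omega

lemma IsHelly.dist_eq_of_le_dist_gslice (hH : IsHelly G) (hconn : G.Connected) {x y w : V}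
    {r : ℕ} (hr : 1 ≤ r) (hle : ∀ a b : V, G.dist a b ≤ 2 * r - 1)
    (hxy : G.dist x y = 2 * r - 1) (hfar : ∀ v ∈ gslice G x (r - 1) y, r ≤ G.dist w v) :
    G.dist x w = 2 * r - 1 := by
  refine le_antisymm (hle x w) (not_lt.mp fun hxw => ?_)
  have := hle y w
  obtain ⟨v, hv, hwv⟩ := hH.exists_mem_gslice_dist_le hconn (x := x) (y := y) (w := w)
    (k := r - 1) (l := r) (m := r - 1) (by omega) (by omega) (by omega)
  have := hfar v hv
  omega

lemma IsHelly.distS_eq_and_proj_eq_gslice_inter (hH : IsHelly G) (hconn : G.Connected)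
    {x y w : V} {r : ℕ} (hr : 1 ≤ r) (hxy : G.dist x y ≤ 2 * r)
    (hwx : G.dist w x = 2 * r - 1) (hwy : G.dist w y = 2 * r - 1) :
    distS G w {z | G.dist z x = r ∧ G.dist z y = r} = r - 1 ∧
    proj G w {z | G.dist z x = r ∧ G.dist z y = r} =
      gslice G w (r - 1) x ∩ gslice G w (r - 1) y := by
  have hZ : ∀ z, (G.dist z x = r ∧ G.dist z y = r) ∧ G.dist w z = r - 1 ↔
      z ∈ gslice G w (r - 1) x ∩ gslice G w (r - 1) y := by
    intro z
    rw [Set.mem_inter_iff, mem_gslice_iff_of_dist_eq hr hwx, mem_gslice_iff_of_dist_eq hr hwy]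
    tauto
  have hZle : ∀ z ∈ {z | G.dist z x = r ∧ G.dist z y = r}, r - 1 ≤ G.dist w z := by
    rintro z ⟨hzx, -⟩
    have := hconn.dist_triangle (u := w) (v := z) (w := x)
    omega
  obtain ⟨z, hzx, hyz⟩ := hH.exists_mem_gslice_dist_le hconn (x := w) (y := x) (w := y)
    (k := r - 1) (l := r) (m := r) (by omega) (by omega) (by omega)
  have hzy : z ∈ gslice G w (r - 1) y := by
    have := hconn.dist_triangle (u := w) (v := z) (w := y)
    have := G.dist_comm (u := y) (v := z)
    rw [mem_gslice_iff_of_dist_eq hr hwy]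
    rw [mem_gslice_iff_of_dist_eq hr hwx] at hzx
    omega
  obtain ⟨hzZ, hwz⟩ := (hZ z).mpr ⟨hzx, hzy⟩
  have hdist : distS G w {z | G.dist z x = r ∧ G.dist z y = r} = r - 1 :=
    distS_eq_of_mem_of_forall_le hzZ hwz hZle
  refine ⟨hdist, ?_⟩
  ext z
  rw [proj, hdist]
  exact hZ z

end

theorem stmt16_general (G : SimpleGraph V) [Fintype V] (hconn : G.Connected) (hH : IsHelly G)
    (hC4 : C4Free G) (r : ℕ) (hr3 : 3 ≤ r)
    (hdiam : gdiam G = 2 * r - 1) (x y : V) (hxy : G.dist x y = gdiam G)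
    (w : V) (hw : distS G w (gslice G x (r - 1) y ∪ gslice G y (r - 1) x) = r) :
    G.dist x w = 2 * r - 1 ∧ G.dist y w = 2 * r - 1 ∧
    distS G w {z | G.dist z x = r ∧ G.dist z y = r} = r - 1 ∧
    proj G w {z | G.dist z x = r ∧ G.dist z y = r} =
      gslice G w (r - 1) x ∩ gslice G w (r - 1) y ∧
    G.IsClique (proj G w {z | G.dist z x = r ∧ G.dist z y = r}) := by
  have hr : 1 ≤ r := by omega
  have hle : ∀ a b : V, G.dist a b ≤ 2 * r - 1 := fun a b => hdiam ▸ dist_le_gdiam a b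
  rw [hdiam] at hxy
  have hfar : ∀ v ∈ gslice G x (r - 1) y ∪ gslice G y (r - 1) x, r ≤ G.dist w v :=
    fun v hv => hw ▸ distS_le_dist hv
  have hxw := hH.dist_eq_of_le_dist_gslice hconn hr hle hxy fun v hv => hfar v (.inl hv)
  have hyw := hH.dist_eq_of_le_dist_gslice hconn hr hle (G.dist_comm.trans hxy)
    fun v hv => hfar v (.inr hv)
  obtain ⟨hdist, hproj⟩ := hH.distS_eq_and_proj_eq_gslice_inter hconn hr (by omega)
    (G.dist_comm.trans hxw) (G.dist_comm.trans hyw)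
  refine ⟨hxw, hyw, hdist, hproj, ?_⟩
  rw [hproj]
  exact (hH.isClique_gslice hconn hC4 w (r - 1) x).subset Set.inter_subset_left

/-- In a finite connected C4-free Helly graph of radius `r ≥ 3` and
diameter `2r − 1`, if `(x,y)` is a diametral pair, `Z = {z : dist(z,x) = dist(z,y) = r}`
and `dist(w, L(x,r−1,y) ∪ L(y,r−1,x)) = r`, then `dist(x,w) = dist(y,w) = 2r − 1`,
`dist(w,Z) = r − 1`, and `Pr(w,Z) = L(w,r−1,x) ∩ L(w,r−1,y)` is a clique. -/
theorem stmt16 (G : SimpleGraph V) [Fintype V] (hconn : G.Connected) (hH : IsHelly G)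
    (hC4 : C4Free G) (r : ℕ) (hr3 : 3 ≤ r) (hrad : grad G = r)
    (hdiam : gdiam G = 2 * r - 1) (x y : V) (hxy : G.dist x y = gdiam G)
    (w : V) (hw : distS G w (gslice G x (r - 1) y ∪ gslice G y (r - 1) x) = r) :
    G.dist x w = 2 * r - 1 ∧ G.dist y w = 2 * r - 1 ∧
    distS G w {z | G.dist z x = r ∧ G.dist z y = r} = r - 1 ∧
    proj G w {z | G.dist z x = r ∧ G.dist z y = r} =
      gslice G w (r - 1) x ∩ gslice G w (r - 1) y ∧
    G.IsClique (proj G w {z | G.dist z x = r ∧ G.dist z y = r}) :=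
  stmt16_general G hconn hH hC4 r hr3 hdiam x y hxy w hw
end

section
/- Let G be a finite connected graph, let S be a clique of G, and let x and y be vertices lying in two different connected components of G − S. Then dist(x,S) + dist(y,S) ≤ dist(x,y) ≤ dist(x,S) + dist(y,S) + 1. -/
open SimpleGraph

variable {V : Type*}

/-! A shortest `x`–`y` path must pass through the separator `S`, which splits it into a path from
`x` to `S` and one from `S` to `y`; this gives the lower bound. Conversely, joining a nearest
point of `S` to `x` and a nearest point of `S` to `y`, which are equal or adjacent since `S` is a
clique, gives a walk of length at most `dist(x,S) + dist(y,S) + 1`. -/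

namespace SimpleGraph

variable {G : SimpleGraph V} {S : Set V} {u v s : V}

lemma Walk.exists_mem_support_of_not_reachable_induce_compl (p : G.Walk u v) (hu : u ∈ Sᶜ)
    (hv : v ∈ Sᶜ) (hsep : ¬ (G.induce Sᶜ).Reachable ⟨u, hu⟩ ⟨v, hv⟩) :
    ∃ s ∈ p.support, s ∈ S := by
  by_contra! hp
  exact hsep (p.induce Sᶜ hp).reachable

lemma Walk.dist_add_dist_le_length (p : G.Walk u v) (hs : s ∈ p.support) :
    G.dist u s + G.dist s v ≤ p.length := by
  classical
  rw [← p.take_spec hs, Walk.length_append]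
  exact add_le_add (dist_le _) (dist_le _)

lemma distS_le_dist (hs : s ∈ S) : distS G v S ≤ G.dist v s :=
  Nat.sInf_le ⟨s, hs, rfl⟩

lemma exists_dist_eq_distS (hS : S.Nonempty) : ∃ s ∈ S, G.dist v s = distS G v S :=
  Nat.sInf_mem (hS.image _)

lemma Connected.distS_add_distS_le_dist (hconn : G.Connected) (hu : u ∈ Sᶜ) (hv : v ∈ Sᶜ)
    (hsep : ¬ (G.induce Sᶜ).Reachable ⟨u, hu⟩ ⟨v, hv⟩) :
    distS G u S + distS G v S ≤ G.dist u v := by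
  obtain ⟨p, hp⟩ := hconn.exists_walk_length_eq_dist u v
  obtain ⟨s, hsp, hs⟩ := p.exists_mem_support_of_not_reachable_induce_compl hu hv hsep
  calc distS G u S + distS G v S ≤ G.dist u s + G.dist s v := by
        rw [dist_comm (u := s)]
        exact add_le_add (distS_le_dist hs) (distS_le_dist hs)
    _ ≤ G.dist u v := hp ▸ p.dist_add_dist_le_length hsp

lemma IsClique.dist_le_one (hS : G.IsClique S) {s t : V} (hs : s ∈ S) (ht : t ∈ S) :
    G.dist s t ≤ 1 := by
  rcases eq_or_ne s t with rfl | hst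
  · simp
  · exact (dist_eq_one_iff_adj.mpr (hS hs ht hst)).le

lemma Connected.dist_le_distS_add_distS_add_one (hconn : G.Connected) (hS : G.IsClique S)
    (hne : S.Nonempty) : G.dist u v ≤ distS G u S + distS G v S + 1 := by
  obtain ⟨s, hs, hus⟩ := exists_dist_eq_distS (v := u) hne
  obtain ⟨t, ht, hvt⟩ := exists_dist_eq_distS (v := v) hne
  calc G.dist u v ≤ G.dist u s + (G.dist s t + G.dist t v) :=
        hconn.dist_triangle.trans (add_le_add_right hconn.dist_triangle _)
    _ ≤ distS G u S + distS G v S + 1 := by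
        rw [dist_comm (u := t), hus, hvt]
        linarith [hS.dist_le_one hs ht]

end SimpleGraph

theorem stmt18_general (G : SimpleGraph V) (hconn : G.Connected)
    (S : Set V) (hS : G.IsClique S)
    (x y : V) (hx : x ∈ (Sᶜ : Set V)) (hy : y ∈ (Sᶜ : Set V))
    (hcomp : ¬ (G.induce (Sᶜ : Set V)).Reachable ⟨x, hx⟩ ⟨y, hy⟩) :
    distS G x S + distS G y S ≤ G.dist x y ∧
    G.dist x y ≤ distS G x S + distS G y S + 1 := by
  obtain ⟨p⟩ := hconn.preconnected x y
  obtain ⟨s, -, hs⟩ := p.exists_mem_support_of_not_reachable_induce_compl hx hy hcomp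
  exact ⟨hconn.distS_add_distS_le_dist hx hy hcomp,
    hconn.dist_le_distS_add_distS_add_one hS ⟨s, hs⟩⟩

/-- In a finite connected graph `G`, if `S` is a clique and `x`, `y`
lie in different connected components of `G − S`, then
`dist(x,S) + dist(y,S) ≤ dist(x,y) ≤ dist(x,S) + dist(y,S) + 1`. -/
theorem stmt18 (G : SimpleGraph V) [Fintype V] (hconn : G.Connected)
    (S : Set V) (hS : G.IsClique S)
    (x y : V) (hx : x ∈ (Sᶜ : Set V)) (hy : y ∈ (Sᶜ : Set V))
    (hcomp : ¬ (G.induce (Sᶜ : Set V)).Reachable ⟨x, hx⟩ ⟨y, hy⟩) :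
    distS G x S + distS G y S ≤ G.dist x y ∧
    G.dist x y ≤ distS G x S + distS G y S + 1 :=
  stmt18_general G hconn S hS x y hx hy hcomp
end
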